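/- arXiv:2602.22893 — 4 statements merged into one kernel-verified Lean document; each statement's English description precedes it below -/
import Mathlib

section
/- Let ρ be a quantum state on a d-dimensional Hilbert space with Hamiltonian H, let P = {P_i}_{i=1}^d be a fine-grained measurement, and let Q = {Q_i}_{i=1}^n be the coarse-grained measurement obtained from P by classical post-processing via a column-stochastic matrix D, i.e. Q_i = Σ_j D_{ij} P_j, where every Q_i is nonzero. Then the observational ergotropy satisfies R(ρ, P) ≥ R(ρ, Q). -/
open Matrix ComplexOrder

/-- Passive energy of a state `σ` w.r.t. the Hamiltonian `H`:
the infimum over all unitaries `U` of `Tr (H U σ U†)`. -/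
noncomputable def Epass {d : ℕ} (H σ : Matrix (Fin d) (Fin d) ℂ) : ℝ :=
  ⨅ U : Matrix.unitaryGroup (Fin d) ℂ,
    ((H * ((U : Matrix (Fin d) (Fin d) ℂ) * σ * ((U : Matrix (Fin d) (Fin d) ℂ))ᴴ)).trace).re

/-- Coarse-grained state `ρ_cg^M = ∑ i, Tr(ρ M i) • M i / Tr(M i)`. -/
noncomputable def cgState {d n : ℕ} (ρ : Matrix (Fin d) (Fin d) ℂ)
    (M : Fin n → Matrix (Fin d) (Fin d) ℂ) : Matrix (Fin d) (Fin d) ℂ :=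
  ∑ i, (((ρ * M i).trace) / ((M i).trace)) • M i

/-- Observational ergotropy `R(ρ, M) = Tr(H ρ) - Epass(ρ_cg^M)`. -/
noncomputable def obsErg {d n : ℕ} (ρ H : Matrix (Fin d) (Fin d) ℂ)
    (M : Fin n → Matrix (Fin d) (Fin d) ℂ) : ℝ :=
  ((H * ρ).trace).re - Epass H (cgState ρ M)

/-- A fine-grained measurement: a family of rank-one mutually orthogonal
(Hermitian) projectors summing to the identity. -/
def FineGrained {d : ℕ} (P : Fin d → Matrix (Fin d) (Fin d) ℂ) : Prop :=
  (∀ i, (P i).IsHermitian) ∧ (∀ i j, P i * P j = if i = j then P i else 0) ∧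
    (∑ i, P i = 1) ∧ (∀ i, (P i).rank = 1)

/-- A column-stochastic matrix: nonnegative entries, every column sums to 1. -/
def ColStochastic {n d : ℕ} (D : Matrix (Fin n) (Fin d) ℝ) : Prop :=
  (∀ i j, 0 ≤ D i j) ∧ ∀ j, ∑ i, D i j = 1

/-- A doubly stochastic matrix: nonnegative entries, all row and column sums are 1. -/
def DoublyStochastic {d : ℕ} (B : Matrix (Fin d) (Fin d) ℝ) : Prop :=
  (∀ i j, 0 ≤ B i j) ∧ (∀ i, ∑ j, B i j = 1) ∧ (∀ j, ∑ i, B i j = 1)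

/-- The entries of `x` rearranged in non-increasing order. -/
noncomputable def descSort {d : ℕ} (x : Fin d → ℝ) : Fin d → ℝ :=
  fun i => x (Tuple.sort x i.rev)

/-- `Majorized x y` (`x ≺ y`): for every `k` the sum of the `k` largest entries
of `x` is at most that of `y`, with equal total sums. -/
def Majorized {d : ℕ} (x y : Fin d → ℝ) : Prop :=
  (∀ k : ℕ, (∑ i : Fin d, if (i : ℕ) < k then descSort x i else 0) ≤
      ∑ i : Fin d, if (i : ℕ) < k then descSort y i else 0) ∧
    (∑ i, x i = ∑ i, y i)

/-- The rank-one projector `|v⟩⟨v|`. -/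
noncomputable def projVec {d : ℕ} (v : Fin d → ℂ) : Matrix (Fin d) (Fin d) ℂ :=
  Matrix.vecMulVec v (star v)

/-- `v` is an orthonormal family: `⟨v i, v j⟩ = δ_{ij}`. -/
def IsONB {d : ℕ} (v : Fin d → (Fin d → ℂ)) : Prop :=
  ∀ i j, star (v i) ⬝ᵥ v j = if i = j then 1 else 0

/-- The dephasing `Δ_ρ = ∑ j ⟨E_j|ρ|E_j⟩ |E_j⟩⟨E_j|` of `ρ` in the basis `v`. -/
noncomputable def dephase {d : ℕ} (ρ : Matrix (Fin d) (Fin d) ℂ)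
    (v : Fin d → (Fin d → ℂ)) : Matrix (Fin d) (Fin d) ℂ :=
  ∑ j, (star (v j) ⬝ᵥ (ρ *ᵥ v j)) • projVec (v j)

/-- Incoherent ergotropy `R_incoherent(ρ) = Tr(H Δ_ρ) - Epass(Δ_ρ)`. -/
noncomputable def Rincoherent {d : ℕ} (ρ H : Matrix (Fin d) (Fin d) ℂ)
    (v : Fin d → (Fin d → ℂ)) : ℝ :=
  ((H * dephase ρ v).trace).re - Epass H (dephase ρ v)

/-!
Write `P j = |v j⟩⟨v j|` for an orthonormal basis `v`. Then `ρ_cg^P = ∑ j, c j • P j` with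
`c j = Tr (ρ P j)`, while `ρ_cg^Q = ∑ k, (B c) k • P k` for the doubly stochastic matrix
`B = Dᵀ diag(1/t) D`, `t` the row sums of `D`. By Birkhoff's theorem `B` is a convex combination
of permutation matrices, and permuting the basis `v` is implemented by a unitary, so `ρ_cg^Q` is a
convex mixture of unitary conjugates of `ρ_cg^P`. The passive energy is an infimum over the
unitary group of real-linear functions, so it does not decrease under such mixtures.
-/

section PassiveEnergy

variable {d : ℕ}

lemma bddBelow_range_energy (H σ : Matrix (Fin d) (Fin d) ℂ) :
    BddBelow (Set.range fun U : unitaryGroup (Fin d) ℂ =>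
      ((H * ((U : Matrix (Fin d) (Fin d) ℂ) * σ * (U : Matrix (Fin d) (Fin d) ℂ)ᴴ)).trace).re) := by
  have hK : IsCompact (Set.univ.pi fun _ : Fin d => Set.univ.pi fun _ : Fin d =>
      Metric.closedBall (0 : ℂ) 1) :=
    isCompact_univ_pi fun _ => isCompact_univ_pi fun _ => isCompact_closedBall 0 1
  have hf : Continuous fun M : Matrix (Fin d) (Fin d) ℂ => ((H * (M * σ * Mᴴ)).trace).re := by
    fun_prop
  refine (hK.image_of_continuousOn hf.continuousOn).bddBelow.mono ?_
  rintro _ ⟨U, rfl⟩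
  exact ⟨U, fun i _ j _ => by simpa using entry_norm_bound_of_unitary U.2 i j, rfl⟩

lemma Epass_le_energy (H σ : Matrix (Fin d) (Fin d) ℂ) (U : unitaryGroup (Fin d) ℂ) :
    Epass H σ ≤
      ((H * ((U : Matrix (Fin d) (Fin d) ℂ) * σ * (U : Matrix (Fin d) (Fin d) ℂ)ᴴ)).trace).re :=
  ciInf_le (bddBelow_range_energy H σ) U

lemma energy_sum_smul {ι : Type*} (H U : Matrix (Fin d) (Fin d) ℂ) (s : Finset ι) (w : ι → ℝ)
    (σ : ι → Matrix (Fin d) (Fin d) ℂ) :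
    ((H * (U * (∑ i ∈ s, (w i : ℂ) • σ i) * Uᴴ)).trace).re =
      ∑ i ∈ s, w i * ((H * (U * σ i * Uᴴ)).trace).re := by
  simp only [Finset.mul_sum, Finset.sum_mul, mul_smul_comm, smul_mul_assoc, trace_sum,
    trace_smul, Complex.re_sum, smul_eq_mul, Complex.re_ofReal_mul]

theorem Epass_le_Epass_sum_smul_conj {ι : Type*} [Fintype ι] (H σ : Matrix (Fin d) (Fin d) ℂ)
    (w : ι → ℝ) (hw0 : ∀ i, 0 ≤ w i) (hw1 : ∑ i, w i = 1) (V : ι → unitaryGroup (Fin d) ℂ) :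
    Epass H σ ≤ Epass H (∑ i, (w i : ℂ) •
      ((V i : Matrix (Fin d) (Fin d) ℂ) * σ * (V i : Matrix (Fin d) (Fin d) ℂ)ᴴ)) := by
  refine le_ciInf fun U => ?_
  calc Epass H σ = ∑ i, w i * Epass H σ := by rw [← Finset.sum_mul, hw1, one_mul]
    _ ≤ ∑ i, w i * ((H * ((U * V i : unitaryGroup (Fin d) ℂ) * σ *
          ((U * V i : unitaryGroup (Fin d) ℂ) : Matrix (Fin d) (Fin d) ℂ)ᴴ)).trace).re :=
      Finset.sum_le_sum fun i _ => mul_le_mul_of_nonneg_left (Epass_le_energy H σ _) (hw0 i)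
    _ = _ := by
      rw [energy_sum_smul]
      simp only [Submonoid.coe_mul, conjTranspose_mul, Matrix.mul_assoc]

end PassiveEnergy

lemma Matrix.apply_mul_apply_eq_of_rank_le_one {m n K : Type*} [Fintype n] [DecidableEq n] [Field K]
    {A : Matrix m n K} (h : A.rank ≤ 1) (i j k l) : A i j * A k l = A i l * A k j := by
  obtain ⟨u, hu⟩ := finrank_le_one_iff.mp h
  have hcol : ∀ j, ∃ c : K, ∀ i, A i j = c * u.1 i := fun j => by
    obtain ⟨c, hc⟩ := hu ⟨A.col j, by simpa using (A.mulVecLin.mem_range_self (Pi.single j 1))⟩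
    exact ⟨c, fun i => (congrFun (congrArg Subtype.val hc) i).symm⟩
  choose c hc using hcol
  simp only [hc]
  ring

lemma Matrix.IsHermitian.exists_eq_projVec_of_rank_eq_one {d : ℕ} {A : Matrix (Fin d) (Fin d) ℂ}
    (hA : A.IsHermitian) (hidem : A * A = A) (hrank : A.rank = 1) :
    ∃ w, star w ⬝ᵥ w = 1 ∧ A = projVec w := by
  obtain ⟨j, a, hja⟩ : ∃ j a, A j a ≠ 0 := by
    by_contra! h
    simp [show A = 0 from Matrix.ext h] at hrank
  set s := ∑ j, Complex.normSq (A j a)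
  have hAaa : A a a = s := by
    conv_lhs => rw [← hidem]
    simp only [mul_apply, s, Complex.ofReal_sum]
    refine Finset.sum_congr rfl fun k _ => ?_
    rw [← hA.apply a k, Complex.star_def, Complex.normSq_eq_conj_mul_self]
  have hs : 0 < s := lt_of_lt_of_le (Complex.normSq_pos.mpr hja)
    (Finset.single_le_sum (fun k _ => Complex.normSq_nonneg (A k a)) (Finset.mem_univ j))
  have hs' : (s : ℂ) ≠ 0 := Complex.ofReal_ne_zero.mpr hs.ne'
  have hsqrt : ((√s : ℝ) : ℂ) * (√s : ℝ) = s := by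
    rw [← Complex.ofReal_mul, Real.mul_self_sqrt hs.le]
  have hconj : ∀ i, star (A i a / (√s : ℝ)) = A a i / (√s : ℝ) := fun i => by
    rw [star_div₀, hA.apply a i, Complex.star_def, Complex.conj_ofReal]
  refine ⟨fun i => A i a / (√s : ℝ), ?_, ?_⟩
  · simp only [dotProduct, Pi.star_apply, hconj, div_mul_div_comm, ← Finset.sum_div, hsqrt]
    rw [div_eq_one_iff_eq hs', ← hAaa, ← mul_apply, hidem]
  · ext i k
    simp only [projVec, vecMulVec_apply, Pi.star_apply, hconj, div_mul_div_comm, hsqrt]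
    rw [eq_div_iff hs', ← hAaa, apply_mul_apply_eq_of_rank_le_one hrank.le]

lemma projVec_mulVec {d : ℕ} (v x : Fin d → ℂ) : projVec v *ᵥ x = (star v ⬝ᵥ x) • v := by
  rw [projVec, vecMulVec_mulVec, op_smul_eq_smul]

lemma FineGrained.exists_isONB {d : ℕ} {P : Fin d → Matrix (Fin d) (Fin d) ℂ}
    (hP : FineGrained P) : ∃ v, IsONB v ∧ ∀ j, P j = projVec (v j) := by
  obtain ⟨hherm, horth, -, hrank⟩ := hP
  choose v hv1 hvP using fun j =>
    (hherm j).exists_eq_projVec_of_rank_eq_one (by simpa using horth j j) (hrank j)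
  refine ⟨v, fun i j => ?_, hvP⟩
  split_ifs with hij
  · exact hij ▸ hv1 i
  · have h0 : star (v i) ⬝ᵥ ((P i * P j) *ᵥ v j) = 0 := by simp [horth i j, hij]
    simpa [← mulVec_mulVec, hvP, projVec_mulVec, hv1, dotProduct_smul] using h0

lemma mul_projVec_mul_conjTranspose {d : ℕ} (V : Matrix (Fin d) (Fin d) ℂ) (x : Fin d → ℂ) :
    V * projVec x * Vᴴ = projVec (V *ᵥ x) := by
  rw [projVec, mul_vecMulVec, vecMulVec_mul, ← star_mulVec, projVec]

lemma FineGrained.trace_eq_one {d : ℕ} {P : Fin d → Matrix (Fin d) (Fin d) ℂ}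
    (hP : FineGrained P) (j : Fin d) : (P j).trace = 1 := by
  obtain ⟨v, hv, hvP⟩ := hP.exists_isONB
  simpa [hvP, projVec, trace_vecMulVec, dotProduct_comm] using hv j j

lemma FineGrained.exists_unitary_conj_eq {d : ℕ} {P : Fin d → Matrix (Fin d) (Fin d) ℂ}
    (hP : FineGrained P) (σ : Equiv.Perm (Fin d)) :
    ∃ V ∈ unitaryGroup (Fin d) ℂ, ∀ k, V * P k * Vᴴ = P (σ k) := by
  obtain ⟨v, hv, hvP⟩ := hP.exists_isONB
  set V := ∑ l, vecMulVec (v (σ l)) (star (v l))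
  have hVv : ∀ k, V *ᵥ v k = v (σ k) := fun k => by
    simp [V, sum_mulVec, vecMulVec_mulVec, hv _ k]
  have hconj : ∀ k, V * P k * Vᴴ = P (σ k) := fun k => by
    rw [hvP, hvP, mul_projVec_mul_conjTranspose, hVv]
  refine ⟨V, ?_, hconj⟩
  rw [mem_unitaryGroup_iff]
  calc V * star V = V * (∑ k, P k) * Vᴴ := by rw [hP.2.2.1, Matrix.mul_one, star_eq_conjTranspose]
    _ = ∑ k, P (σ k) := by simp only [Finset.mul_sum, Finset.sum_mul, hconj]
    _ = 1 := (Equiv.sum_comp σ P).trans hP.2.2.1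

/-- Post-processing by `D` followed by Bayesian retrodiction from the uniform prior. -/
noncomputable def postprocessRoundTrip {ι κ : Type*} [Fintype ι] [Fintype κ]
    (D : Matrix ι κ ℝ) : Matrix κ κ ℝ :=
  Matrix.of fun j k => ∑ i, D i j * D i k / ∑ l, D i l

lemma postprocessRoundTrip_mem_doublyStochastic {ι κ : Type*} [Fintype ι] [Fintype κ]
    [DecidableEq κ] {D : Matrix ι κ ℝ} (hD0 : ∀ i j, 0 ≤ D i j) (hD1 : ∀ j, ∑ i, D i j = 1) :
    postprocessRoundTrip D ∈ doublyStochastic ℝ κ := by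
  have hrow : ∀ j, ∑ k, postprocessRoundTrip D j k = 1 := fun j => by
    simp only [postprocessRoundTrip, of_apply]
    rw [Finset.sum_comm, ← hD1 j]
    refine Finset.sum_congr rfl fun i _ => ?_
    rw [← Finset.sum_div, ← Finset.mul_sum]
    rcases eq_or_ne (∑ l, D i l) 0 with ht | ht
    · -- `x / 0 = 0` is harmless here: a zero row sum forces the whole row to vanish
      have : D i j = 0 := le_antisymm
        (ht ▸ Finset.single_le_sum (fun l _ => hD0 i l) (Finset.mem_univ j)) (hD0 i j)
      simp [this]
    · exact mul_div_cancel_right₀ _ ht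
  refine mem_doublyStochastic_iff_sum.mpr ⟨fun j k => ?_, hrow, fun k => ?_⟩
  · exact Finset.sum_nonneg fun i _ =>
      div_nonneg (mul_nonneg (hD0 i j) (hD0 i k)) (Finset.sum_nonneg fun l _ => hD0 i l)
  · simpa only [postprocessRoundTrip, of_apply, mul_comm (D _ _) (D _ k)] using hrow k

section CoarseGraining

variable {d n : ℕ} (ρ : Matrix (Fin d) (Fin d) ℂ) {P : Fin d → Matrix (Fin d) (Fin d) ℂ}

lemma cgState_eq_sum_of_trace_eq_one (htr : ∀ j, (P j).trace = 1) :
    cgState ρ P = ∑ j, (ρ * P j).trace • P j := by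
  simp [cgState, htr]

lemma cgState_postprocess (htr : ∀ j, (P j).trace = 1) {D : Matrix (Fin n) (Fin d) ℝ}
    {Q : Fin n → Matrix (Fin d) (Fin d) ℂ} (hQ : ∀ i, Q i = ∑ j, (D i j : ℂ) • P j) :
    cgState ρ Q =
      ∑ k, (∑ j, (postprocessRoundTrip D k j : ℂ) * (ρ * P j).trace) • P k := by
  simp only [cgState, hQ, Finset.mul_sum, mul_smul_comm, trace_sum, trace_smul, htr,
    smul_eq_mul, mul_one, Finset.smul_sum, smul_smul, postprocessRoundTrip, of_apply]
  rw [Finset.sum_comm]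
  refine Finset.sum_congr rfl fun k _ => ?_
  rw [← Finset.sum_smul]
  congr 1
  push_cast
  simp only [Finset.sum_mul, Finset.sum_div]
  rw [Finset.sum_comm]
  exact Finset.sum_congr rfl fun i _ => Finset.sum_congr rfl fun j _ => by ring

end CoarseGraining

lemma sum_smul_permMatrix_apply_mul {m : Type*} [Fintype m] [DecidableEq m]
    (w : Equiv.Perm m → ℝ) (c : m → ℂ) (k : m) :
    ∑ j, (((∑ σ, w σ • σ.permMatrix ℝ) k j : ℝ) : ℂ) * c j = ∑ σ, (w σ : ℂ) * c (σ k) := by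
  simp only [Matrix.sum_apply, Matrix.smul_apply, Equiv.Perm.permMatrix, PEquiv.toMatrix_apply,
    Equiv.toPEquiv_apply, Option.mem_def, Option.some.injEq, smul_eq_mul, mul_ite, mul_one,
    mul_zero, Complex.ofReal_sum, Finset.sum_mul, apply_ite Complex.ofReal, ite_mul,
    Complex.ofReal_zero, zero_mul]
  rw [Finset.sum_comm]
  simp

theorem obsErg_postprocess_le_general {d n : ℕ} (ρ H : Matrix (Fin d) (Fin d) ℂ)
    (P : Fin d → Matrix (Fin d) (Fin d) ℂ) (hP : FineGrained P)
    (D : Matrix (Fin n) (Fin d) ℝ) (hD : ColStochastic D)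
    (Q : Fin n → Matrix (Fin d) (Fin d) ℂ)
    (hQ : ∀ i, Q i = ∑ j, (D i j : ℂ) • P j) :
    obsErg ρ H Q ≤ obsErg ρ H P := by
  obtain ⟨w, hw0, hw1, hBw⟩ := exists_eq_sum_perm_of_mem_doublyStochastic
    (postprocessRoundTrip_mem_doublyStochastic hD.1 hD.2)
  choose V hV hVP using fun π : Equiv.Perm (Fin d) => hP.exists_unitary_conj_eq π⁻¹
  have hmix : cgState ρ Q = ∑ π, (w π : ℂ) • (V π * cgState ρ P * (V π)ᴴ) := by
    rw [cgState_postprocess ρ hP.trace_eq_one hQ,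
      cgState_eq_sum_of_trace_eq_one ρ hP.trace_eq_one, ← hBw]
    simp only [sum_smul_permMatrix_apply_mul, Finset.mul_sum, Finset.sum_mul, mul_smul_comm,
      smul_mul_assoc, hVP, Finset.sum_smul, Finset.smul_sum, smul_smul]
    rw [Finset.sum_comm]
    refine Finset.sum_congr rfl fun π _ => ?_
    exact Fintype.sum_equiv π _ _ fun k => by simp
  have hEpass : Epass H (cgState ρ P) ≤ Epass H (cgState ρ Q) :=
    hmix ▸ Epass_le_Epass_sum_smul_conj H _ w hw0 hw1 fun π => ⟨V π, hV π⟩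
  exact sub_le_sub_left hEpass _

/-- fine-grained measurements yield at least as much observational
ergotropy as their classically post-processed (coarse-grained) counterparts. -/
theorem obsErg_postprocess_le {d n : ℕ} (ρ H : Matrix (Fin d) (Fin d) ℂ)
    (hρ : ρ.PosSemidef) (hρtr : ρ.trace = 1) (hH : H.IsHermitian)
    (P : Fin d → Matrix (Fin d) (Fin d) ℂ) (hP : FineGrained P)
    (D : Matrix (Fin n) (Fin d) ℝ) (hD : ColStochastic D)
    (Q : Fin n → Matrix (Fin d) (Fin d) ℂ)
    (hQ : ∀ i, Q i = ∑ j, (D i j : ℂ) • P j)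
    (hQ0 : ∀ i, Q i ≠ 0) :
    obsErg ρ H Q ≤ obsErg ρ H P :=
  obsErg_postprocess_le_general ρ H P hP D hD Q hQ
end

section
/- Let ρ be a quantum state on a d-dimensional Hilbert space with Hamiltonian H having spectral decomposition H = Σ_j E_j |E_j⟩⟨E_j| with orthonormal eigenbasis {|E_j⟩}. Consider the set of energy-incoherent POVMs, i.e. measurements N = {N_i}_{i=1}^n of the form N_i = Σ_j q(i|j) |E_j⟩⟨E_j| for a column-stochastic matrix q(i|j), with every N_i nonzero. Then the supremum of the observational ergotropy R(ρ, N) over all such energy-incoherent POVMs equals the incoherent ergotropy R_incoherent(ρ), and it is attained by the projective measurement E = {|E_j⟩⟨E_j|}_{j=1}^d. -/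
/-! Coarse-graining `ρ` with an energy-incoherent POVM `N i = ∑ j, q(i|j) |E_j⟩⟨E_j|` gives a state
diagonal in the energy eigenbasis, with populations `B p`, where `p j = ⟨E_j|ρ|E_j⟩` and
`B j k = ∑ i, q(i|j) q(i|k) / ∑ l, q(i|l)` is doubly stochastic. By Birkhoff's theorem `B p` is a
convex combination of permutations of `p`. The passive energy is invariant under unitary
conjugation, hence under permuting populations, and it is concave, so the coarse-grained state has
passive energy at least that of the dephased state `Δ_ρ`. Dephasing in the eigenbasis preserves the
energy, so `R(ρ, N) ≤ R_incoherent(ρ)`, with equality for the projective measurement. -/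

open Matrix ComplexOrder

theorem isCompact_unitaryGroup (n 𝕜 : Type*) [Fintype n] [DecidableEq n] [RCLike 𝕜] :
    IsCompact (unitaryGroup n 𝕜 : Set (Matrix n n 𝕜)) := by
  have hclosed : IsClosed (unitaryGroup n 𝕜 : Set (Matrix n n 𝕜)) := isClosed_unitary
  open scoped Matrix.Norms.Elementwise in
  exact Metric.isCompact_of_isClosed_isBounded hclosed <|
    (Metric.isBounded_closedBall (x := 0) (r := 1)).subset fun _ hU =>
      mem_closedBall_zero_iff.2 (entrywise_sup_norm_bound_of_unitary hU)

section PassiveEnergy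

variable {d : ℕ}

theorem bddBelow_range_trace_mul_unitary_conj (H A : Matrix (Fin d) (Fin d) ℂ) :
    BddBelow (Set.range fun U : unitaryGroup (Fin d) ℂ =>
      (H * ((U : Matrix (Fin d) (Fin d) ℂ) * A * (U : Matrix (Fin d) (Fin d) ℂ)ᴴ)).trace.re) := by
  have : CompactSpace (unitaryGroup (Fin d) ℂ) :=
    isCompact_iff_compactSpace.1 (isCompact_unitaryGroup (Fin d) ℂ)
  exact (isCompact_range (by fun_prop)).bddBelow

theorem Epass_unitary_conj (H A : Matrix (Fin d) (Fin d) ℂ) (V : unitaryGroup (Fin d) ℂ) :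
    Epass H ((V : Matrix (Fin d) (Fin d) ℂ) * A * (V : Matrix (Fin d) (Fin d) ℂ)ᴴ) = Epass H A := by
  unfold Epass
  rw [← (Equiv.mulRight V).iInf_comp (g := fun U : unitaryGroup (Fin d) ℂ =>
    (H * ((U : Matrix (Fin d) (Fin d) ℂ) * A * (U : Matrix (Fin d) (Fin d) ℂ)ᴴ)).trace.re)]
  simp only [Equiv.coe_mulRight, MulMemClass.coe_mul, conjTranspose_mul, Matrix.mul_assoc]

theorem sum_mul_Epass_le_Epass_sum {ι : Type*} [Fintype ι] (H : Matrix (Fin d) (Fin d) ℂ)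
    {w : ι → ℝ} (hw : ∀ k, 0 ≤ w k) (A : ι → Matrix (Fin d) (Fin d) ℂ) :
    ∑ k, w k * Epass H (A k) ≤ Epass H (∑ k, w k • A k) := by
  refine le_ciInf fun U => ?_
  simp only [Matrix.mul_sum, Matrix.sum_mul, Matrix.mul_smul, Matrix.smul_mul, trace_sum,
    trace_smul, Complex.re_sum, Complex.smul_re, smul_eq_mul]
  exact Finset.sum_le_sum fun k _ =>
    mul_le_mul_of_nonneg_left (ciInf_le (bddBelow_range_trace_mul_unitary_conj H (A k)) U) (hw k)

end PassiveEnergy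

section Basis

variable {d : ℕ} {v : Fin d → (Fin d → ℂ)}

noncomputable def diagInBasis (v : Fin d → (Fin d → ℂ)) (c : Fin d → ℂ) :
    Matrix (Fin d) (Fin d) ℂ :=
  ∑ j, c j • projVec (v j)

theorem trace_mul_projVec (ρ : Matrix (Fin d) (Fin d) ℂ) (w : Fin d → ℂ) :
    (ρ * projVec w).trace = star w ⬝ᵥ (ρ *ᵥ w) := by
  rw [projVec, mul_vecMulVec, trace_vecMulVec, dotProduct_comm]

theorem IsONB.trace_projVec (hv : IsONB v) (j : Fin d) : (projVec (v j)).trace = 1 := by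
  rw [projVec, trace_vecMulVec, dotProduct_comm, hv j j, if_pos rfl]

theorem IsONB.comp_perm (hv : IsONB v) (σ : Equiv.Perm (Fin d)) : IsONB (v ∘ σ) := by
  intro i j
  simp only [Function.comp_apply, hv (σ i) (σ j), σ.injective.eq_iff]

theorem IsONB.mem_unitaryGroup (hv : IsONB v) :
    (of v)ᵀ ∈ unitaryGroup (Fin d) ℂ := by
  rw [mem_unitaryGroup_iff']
  ext i j
  simpa [mul_apply, dotProduct, one_apply] using hv i j

theorem diagInBasis_eq_mul_diagonal_mul (v : Fin d → (Fin d → ℂ)) (c : Fin d → ℂ) :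
    diagInBasis v c = (of v)ᵀ * diagonal c * ((of v)ᵀ)ᴴ := by
  ext a b
  rw [mul_apply]
  simp only [mul_diagonal, diagInBasis, projVec, Matrix.sum_apply, Matrix.smul_apply,
    vecMulVec_apply, conjTranspose_apply, transpose_apply, of_apply, Pi.star_apply, smul_eq_mul]
  exact Finset.sum_congr rfl fun j _ => by ring

theorem diagInBasis_comp_perm (v : Fin d → (Fin d → ℂ)) (c : Fin d → ℂ)
    (σ : Equiv.Perm (Fin d)) : diagInBasis v (c ∘ σ) = diagInBasis (v ∘ σ.symm) c := by
  simpa [diagInBasis] using (Equiv.sum_comp σ fun k => c k • projVec (v (σ.symm k)))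

theorem diagInBasis_sum_smul {ι : Type*} [Fintype ι] (v : Fin d → (Fin d → ℂ)) (w : ι → ℝ)
    (c : ι → Fin d → ℂ) : diagInBasis v (∑ k, w k • c k) = ∑ k, w k • diagInBasis v (c k) := by
  simp only [diagInBasis, Finset.sum_apply, Pi.smul_apply, Finset.sum_smul, Finset.smul_sum,
    smul_assoc]
  exact Finset.sum_comm

theorem trace_diagInBasis (hv : IsONB v) (c : Fin d → ℂ) : (diagInBasis v c).trace = ∑ j, c j := by
  simp [diagInBasis, trace_sum, hv.trace_projVec]

theorem trace_mul_diagInBasis (ρ : Matrix (Fin d) (Fin d) ℂ) (c : Fin d → ℂ) :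
    (ρ * diagInBasis v c).trace = ∑ j, c j * (star (v j) ⬝ᵥ (ρ *ᵥ v j)) := by
  simp [diagInBasis, Matrix.mul_sum, trace_sum, trace_mul_projVec]

theorem diagInBasis_mul_diagInBasis (hv : IsONB v) (a b : Fin d → ℂ) :
    diagInBasis v a * diagInBasis v b = diagInBasis v (a * b) := by
  set V := (of v)ᵀ
  have hV : Vᴴ * V = 1 := mem_unitaryGroup_iff'.1 hv.mem_unitaryGroup
  calc diagInBasis v a * diagInBasis v b = V * diagonal a * (Vᴴ * V) * diagonal b * Vᴴ := by
        simp only [diagInBasis_eq_mul_diagonal_mul, V, Matrix.mul_assoc]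
    _ = diagInBasis v (a * b) := by
        rw [hV, Matrix.mul_one, Matrix.mul_assoc V, diagonal_mul_diagonal',
          diagInBasis_eq_mul_diagonal_mul]
        rfl

theorem Epass_diagInBasis (H : Matrix (Fin d) (Fin d) ℂ) (hv : IsONB v) (c : Fin d → ℂ) :
    Epass H (diagInBasis v c) = Epass H (diagonal c) := by
  rw [diagInBasis_eq_mul_diagonal_mul]
  exact Epass_unitary_conj H _ ⟨_, hv.mem_unitaryGroup⟩

theorem Epass_diagInBasis_comp_perm (H : Matrix (Fin d) (Fin d) ℂ) (hv : IsONB v)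
    (c : Fin d → ℂ) (σ : Equiv.Perm (Fin d)) :
    Epass H (diagInBasis v (c ∘ σ)) = Epass H (diagInBasis v c) := by
  rw [diagInBasis_comp_perm, Epass_diagInBasis H (hv.comp_perm _), Epass_diagInBasis H hv]

end Basis

section Dephasing

variable {d : ℕ} {v : Fin d → (Fin d → ℂ)}

theorem Epass_diagInBasis_le_of_mem_doublyStochastic (H : Matrix (Fin d) (Fin d) ℂ)
    (hv : IsONB v) {B : Matrix (Fin d) (Fin d) ℝ} (hB : B ∈ doublyStochastic ℝ (Fin d))
    (c : Fin d → ℂ) :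
    Epass H (diagInBasis v c) ≤ Epass H (diagInBasis v fun j => ∑ k, B j k • c k) := by
  obtain ⟨w, hw0, hw1, rfl⟩ := exists_eq_sum_perm_of_mem_doublyStochastic hB
  have hmix : (fun j => ∑ k, (∑ σ, w σ • σ.permMatrix ℝ) j k • c k) = ∑ σ, w σ • (c ∘ σ) := by
    ext j
    simp [Matrix.sum_apply, Finset.sum_smul, Equiv.toPEquiv_apply, Finset.sum_comm (γ := Fin d)]
  calc Epass H (diagInBasis v c) = ∑ σ, w σ * Epass H (diagInBasis v (c ∘ σ)) := by
        simp only [Epass_diagInBasis_comp_perm H hv, ← Finset.sum_mul, hw1, one_mul]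
    _ ≤ _ := by
        rw [hmix, diagInBasis_sum_smul]
        exact sum_mul_Epass_le_Epass_sum H hw0 _

noncomputable def coarseGrainingMatrix {n : ℕ} (q : Matrix (Fin n) (Fin d) ℝ) :
    Matrix (Fin d) (Fin d) ℝ :=
  of fun j k => ∑ i, q i j * q i k / ∑ l, q i l

theorem ColStochastic.coarseGrainingMatrix_mem_doublyStochastic {n : ℕ}
    {q : Matrix (Fin n) (Fin d) ℝ} (hq : ColStochastic q) :
    coarseGrainingMatrix q ∈ doublyStochastic ℝ (Fin d) := by
  obtain ⟨hq0, hq1⟩ := hq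
  have hrow (i : Fin n) (k : Fin d) : (∑ l, q i l) * q i k / ∑ l, q i l = q i k := by
    -- a zero row (that is, `N i = 0`) is harmless: both sides vanish
    rcases (Finset.sum_nonneg fun l _ => hq0 i l).eq_or_lt with h | h
    · simp [(Finset.sum_eq_zero_iff_of_nonneg fun l _ => hq0 i l).1 h.symm k (Finset.mem_univ k)]
    · field_simp
  simp only [mem_doublyStochastic_iff_sum, coarseGrainingMatrix, of_apply]
  refine ⟨fun j k => ?_, fun j => ?_, fun k => ?_⟩
  · exact Finset.sum_nonneg fun i _ =>
      div_nonneg (mul_nonneg (hq0 i j) (hq0 i k)) (Finset.sum_nonneg fun l _ => hq0 i l)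
  · rw [Finset.sum_comm]
    simp_rw [← Finset.sum_div, ← Finset.mul_sum, mul_comm (q _ j), hrow, hq1]
  · rw [Finset.sum_comm]
    simp_rw [← Finset.sum_div, ← Finset.sum_mul, hrow, hq1]

theorem cgState_diagInBasis (hv : IsONB v) (ρ : Matrix (Fin d) (Fin d) ℂ) {n : ℕ}
    (q : Matrix (Fin n) (Fin d) ℝ) :
    cgState ρ (fun i => diagInBasis v fun j => (q i j : ℂ)) =
      diagInBasis v fun j => ∑ k, coarseGrainingMatrix q j k • (star (v k) ⬝ᵥ (ρ *ᵥ v k)) := by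
  simp only [cgState, trace_mul_diagInBasis, trace_diagInBasis hv]
  simp only [diagInBasis, Finset.smul_sum, smul_smul]
  rw [Finset.sum_comm]
  refine Finset.sum_congr rfl fun j _ => ?_
  rw [← Finset.sum_smul]
  congr 1
  simp only [coarseGrainingMatrix, of_apply, Complex.real_smul, Complex.ofReal_sum,
    Complex.ofReal_div, Complex.ofReal_mul, Finset.sum_mul, Finset.sum_div]
  rw [Finset.sum_comm]
  exact Finset.sum_congr rfl fun i _ => Finset.sum_congr rfl fun k _ => by ring

theorem dephase_eq_diagInBasis (ρ : Matrix (Fin d) (Fin d) ℂ) (v : Fin d → (Fin d → ℂ)) :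
    dephase ρ v = diagInBasis v fun j => star (v j) ⬝ᵥ (ρ *ᵥ v j) :=
  rfl

theorem trace_diagInBasis_mul_dephase (hv : IsONB v) (E : Fin d → ℂ)
    (ρ : Matrix (Fin d) (Fin d) ℂ) :
    (diagInBasis v E * dephase ρ v).trace = (diagInBasis v E * ρ).trace := by
  rw [dephase_eq_diagInBasis, diagInBasis_mul_diagInBasis hv, trace_diagInBasis hv,
    trace_mul_comm, trace_mul_diagInBasis]
  rfl

theorem cgState_projVec (hv : IsONB v) (ρ : Matrix (Fin d) (Fin d) ℂ) :
    cgState ρ (fun j => projVec (v j)) = dephase ρ v := by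
  simp only [cgState, dephase, trace_mul_projVec, hv.trace_projVec, div_one]

theorem diagInBasis_one_row (v : Fin d → (Fin d → ℂ)) (i : Fin d) :
    (diagInBasis v fun j => ((1 : Matrix (Fin d) (Fin d) ℝ) i j : ℂ)) = projVec (v i) := by
  simp [diagInBasis, one_apply]

theorem colStochastic_one : ColStochastic (1 : Matrix (Fin d) (Fin d) ℝ) :=
  ⟨zero_le_one_elem, fun j => by simp [one_apply]⟩

theorem IsONB.projVec_ne_zero (hv : IsONB v) (j : Fin d) : projVec (v j) ≠ 0 := fun h => by
  simpa [h] using hv.trace_projVec j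

end Dephasing

theorem obsErg_energyIncoherent_isGreatest_general {d : ℕ} (ρ H : Matrix (Fin d) (Fin d) ℂ)
    (E : Fin d → ℝ) (v : Fin d → (Fin d → ℂ)) (hv : IsONB v)
    (hH : H = ∑ j, (E j : ℂ) • projVec (v j)) :
    obsErg ρ H (fun j => projVec (v j)) = Rincoherent ρ H v ∧
    IsGreatest
      {r : ℝ | ∃ (n : ℕ) (q : Matrix (Fin n) (Fin d) ℝ)
          (N : Fin n → Matrix (Fin d) (Fin d) ℂ),
          ColStochastic q ∧
          (∀ i, N i = ∑ j, (q i j : ℂ) • projVec (v j)) ∧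
          (∀ i, N i ≠ 0) ∧ r = obsErg ρ H N}
      (Rincoherent ρ H v) := by
  have henergy : (H * dephase ρ v).trace = (H * ρ).trace :=
    hH ▸ trace_diagInBasis_mul_dephase hv (fun j => E j) ρ
  have hproj : obsErg ρ H (fun j => projVec (v j)) = Rincoherent ρ H v := by
    rw [obsErg, Rincoherent, cgState_projVec hv, henergy]
  refine ⟨hproj, ⟨d, 1, _, colStochastic_one, fun i => (diagInBasis_one_row v i).symm,
    hv.projVec_ne_zero, hproj.symm⟩, ?_⟩
  rintro r ⟨n, q, N, hq, hN, -, rfl⟩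
  obtain rfl : N = fun i => diagInBasis v fun j => (q i j : ℂ) := funext hN
  rw [obsErg, Rincoherent, henergy, cgState_diagInBasis hv, dephase_eq_diagInBasis]
  exact sub_le_sub_left (Epass_diagInBasis_le_of_mem_doublyStochastic H hv
    hq.coarseGrainingMatrix_mem_doublyStochastic _) _

/-- over all energy-incoherent POVMs, the observational ergotropy
has supremum equal to the incoherent ergotropy, attained by the projective
measurement in the energy eigenbasis. -/
theorem obsErg_energyIncoherent_isGreatest {d : ℕ} (ρ H : Matrix (Fin d) (Fin d) ℂ)
    (hρ : ρ.PosSemidef) (hρtr : ρ.trace = 1)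
    (E : Fin d → ℝ) (v : Fin d → (Fin d → ℂ)) (hv : IsONB v)
    (hH : H = ∑ j, (E j : ℂ) • projVec (v j)) :
    obsErg ρ H (fun j => projVec (v j)) = Rincoherent ρ H v ∧
    IsGreatest
      {r : ℝ | ∃ (n : ℕ) (q : Matrix (Fin n) (Fin d) ℝ)
          (N : Fin n → Matrix (Fin d) (Fin d) ℂ),
          ColStochastic q ∧
          (∀ i, N i = ∑ j, (q i j : ℂ) • projVec (v j)) ∧
          (∀ i, N i ≠ 0) ∧ r = obsErg ρ H N}
      (Rincoherent ρ H v) :=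
  obsErg_energyIncoherent_isGreatest_general ρ H E v hv hH
end

section
/- Let ρ be a quantum state on a d-dimensional Hilbert space, let P = {P_i}_{i=1}^d be a fine-grained measurement, and let Q = {Q_i}_{i=1}^n be the coarse-grained measurement obtained from P by classical post-processing via a column-stochastic matrix D, i.e. Q_i = Σ_j D_{ij} P_j, with every Q_i nonzero. Then the vector of eigenvalues of the coarse-grained state ρ_cg^P majorizes the vector of eigenvalues of the coarse-grained state ρ_cg^Q, i.e. λ(ρ_cg^Q) ≺ λ(ρ_cg^P). -/
open Matrix ComplexOrder

/-!
Let `Q` be a POVM with nonzero elements and `σ` a Hermitian matrix with the same outcome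
statistics under `Q` as `ρ`, so that `ρ_cg^Q = ∑ᵢ Tr(σ Qᵢ)/Tr(Qᵢ) Qᵢ`. Expanding in
eigenbases `b` of `ρ_cg^Q` and `b'` of `σ` gives `λ(ρ_cg^Q) = T λ(σ)` with
`T k l = ∑ᵢ ⟨b k|Qᵢ|b k⟩ ⟨b' l|Qᵢ|b' l⟩ / Tr Qᵢ`, and `T` is doubly stochastic because
`∑ᵢ Qᵢ = 1` and `∑ₖ ⟨b k|Qᵢ|b k⟩ = Tr Qᵢ`. A doubly stochastic image is majorized by the
original vector. For `Qᵢ = ∑ⱼ Dᵢⱼ Pⱼ` one takes `σ = ρ_cg^P`: since the `Pⱼ` are orthogonal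
projections, `Tr(ρ_cg^P Pⱼ) = Tr(ρ Pⱼ)`.
-/

open Finset

section Majorization

variable {d : ℕ}

lemma descSort_antitone (x : Fin d → ℝ) : Antitone (descSort x) :=
  fun _ _ hij => Tuple.monotone_sort x (Fin.rev_le_rev.mpr hij)

lemma sum_comp_descSort (x : Fin d → ℝ) (g : ℝ → ℝ) :
    ∑ i, g (descSort x i) = ∑ i, g (x i) :=
  Equiv.sum_comp (Fin.revPerm.trans (Tuple.sort x)) (g ∘ x)

noncomputable def topSum (k : ℕ) (x : Fin d → ℝ) : ℝ :=
  ∑ i : Fin d, if (i : ℕ) < k then descSort x i else 0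

lemma topSum_eq_sum_filter (k : ℕ) (x : Fin d → ℝ) :
    topSum k x = ∑ i : Fin d with i.val < k, descSort x i :=
  (sum_filter _ _).symm

lemma topSum_of_le {k : ℕ} (hdk : d ≤ k) (x : Fin d → ℝ) : topSum k x = ∑ i, x i :=
  (sum_congr rfl fun i _ => if_pos (i.2.trans_le hdk)).trans (sum_comp_descSort x id)

lemma exists_card_eq_topSum_eq_sum {k : ℕ} (hkd : k ≤ d) (x : Fin d → ℝ) :
    ∃ S : Finset (Fin d), #S = k ∧ topSum k x = ∑ j ∈ S, x j := by
  have hinj : Function.Injective fun i : Fin d => Tuple.sort x i.rev :=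
    (Tuple.sort x).injective.comp Fin.rev_injective
  refine ⟨({i : Fin d | (i : ℕ) < k} : Finset (Fin d)).image fun i => Tuple.sort x i.rev, ?_, ?_⟩
  · rw [card_image_of_injective _ hinj, Fin.card_filter_val_lt, min_eq_right hkd]
  · rw [topSum_eq_sum_filter, sum_image fun a _ b _ h => hinj h]
    rfl

lemma sum_mul_le_topSum {k : ℕ} (hkd : k ≤ d) (x c : Fin d → ℝ) (hc0 : ∀ j, 0 ≤ c j)
    (hc1 : ∀ j, c j ≤ 1) (hck : ∑ j, c j = k) : ∑ j, c j * x j ≤ topSum k x := by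
  rcases Nat.eq_zero_or_pos d with rfl | hd
  · simp [topSum]
  -- the threshold is the `k`-th largest entry (the largest one when `k = 0`)
  set t := descSort x ⟨k - 1, by omega⟩
  have hclip : ∑ i, max (descSort x i - t) 0 = topSum k x - k * t := by
    have hk : ∑ i : Fin d with i.val < k, t = k * t := by
      rw [sum_const, Fin.card_filter_val_lt, min_eq_right hkd, nsmul_eq_mul]
    rw [topSum_eq_sum_filter, ← hk, ← sum_sub_distrib, sum_filter]
    refine sum_congr rfl fun i _ => ?_
    split_ifs with hi
    · exact max_eq_left (sub_nonneg.2
        (descSort_antitone x (Fin.le_def.2 (show (i : ℕ) ≤ k - 1 by omega))))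
    · exact max_eq_right (sub_nonpos.2
        (descSort_antitone x (Fin.le_def.2 (show k - 1 ≤ (i : ℕ) by omega))))
  calc ∑ j, c j * x j = ∑ j, c j * (x j - t) + k * t := by
        rw [← hck, sum_mul, ← sum_add_distrib]
        exact sum_congr rfl fun j _ => by ring
    _ ≤ ∑ j, max (x j - t) 0 + k * t := by
        gcongr with j
        rcases le_total t (x j) with h | h
        · exact (mul_le_of_le_one_left (sub_nonneg.2 h) (hc1 j)).trans (le_max_left _ _)
        · exact (mul_nonpos_of_nonneg_of_nonpos (hc0 j) (sub_nonpos.2 h)).trans (le_max_right _ _)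
    _ = topSum k x := by
        rw [← sum_comp_descSort x fun z => max (z - t) 0, hclip]
        ring

theorem majorized_mulVec_of_mem_doublyStochastic {B : Matrix (Fin d) (Fin d) ℝ}
    (hB : B ∈ doublyStochastic ℝ (Fin d)) (x : Fin d → ℝ) : Majorized (B *ᵥ x) x := by
  have hsum : ∑ j, (B *ᵥ x) j = ∑ m, x m := sum_mulVec_of_mem_doublyStochastic hB
  refine ⟨fun k => ?_, hsum⟩
  change topSum k (B *ᵥ x) ≤ topSum k x
  rcases le_total k d with hkd | hdk
  · obtain ⟨S, hS, hSsum⟩ := exists_card_eq_topSum_eq_sum hkd (B *ᵥ x)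
    rw [hSsum]
    calc ∑ j ∈ S, (B *ᵥ x) j = ∑ m, (∑ j ∈ S, B j m) * x m := by
          simp only [mulVec, dotProduct, sum_mul]
          exact sum_comm
      _ ≤ topSum k x := by
          refine sum_mul_le_topSum hkd x _ (fun m => sum_nonneg fun j _ => hB.1 j m)
            (fun m => ?_) ?_
          · exact (sum_le_sum_of_subset_of_nonneg (subset_univ S) fun j _ _ => hB.1 j m).trans_eq
              (sum_col_of_mem_doublyStochastic hB m)
          · rw [sum_comm]
            simp [sum_row_of_mem_doublyStochastic hB, hS]
  · rw [topSum_of_le hdk, topSum_of_le hdk, hsum]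

end Majorization

lemma mul_diagonal_inv_mul_transpose_mem_doublyStochastic {m ι : Type*} [Fintype m]
    [DecidableEq m] [Fintype ι] [DecidableEq ι] {a a' : Matrix m ι ℝ} {t : ι → ℝ}
    (ha : ∀ k i, 0 ≤ a k i) (ha' : ∀ l i, 0 ≤ a' l i) (ht : ∀ i, 0 < t i)
    (ha1 : a *ᵥ 1 = 1) (ha1' : a' *ᵥ 1 = 1) (hat : 1 ᵥ* a = t) (hat' : 1 ᵥ* a' = t) :
    a * diagonal t⁻¹ * a'ᵀ ∈ doublyStochastic ℝ m := by
  have hinv : diagonal t⁻¹ *ᵥ t = 1 := funext fun i => by simp [mulVec_diagonal, (ht i).ne']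
  have hinv' : t ᵥ* diagonal t⁻¹ = 1 := funext fun i => by simp [vecMul_diagonal, (ht i).ne']
  refine mem_doublyStochastic.2 ⟨fun k l => ?_, ?_, ?_⟩
  · rw [mul_apply]
    simp only [mul_diagonal, transpose_apply]
    exact sum_nonneg fun i _ => mul_nonneg (mul_nonneg (ha k i) (inv_nonneg.2 (ht i).le)) (ha' l i)
  · rw [← mulVec_mulVec, ← mulVec_mulVec, mulVec_transpose, hat', hinv, ha1]
  · rw [← vecMul_vecMul, ← vecMul_vecMul, hat, hinv', vecMul_transpose, ha1']

lemma Matrix.IsHermitian.coe_re_trace {𝕜 n : Type*} [RCLike 𝕜] [Fintype n] {M : Matrix n n 𝕜}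
    (hM : M.IsHermitian) : (RCLike.re M.trace : 𝕜) = M.trace := by
  simp [trace, hM.coe_re_apply_self]

lemma Matrix.IsHermitian.posSemidef_of_mul_self_eq {𝕜 n : Type*} [RCLike 𝕜] [Fintype n]
    {M : Matrix n n 𝕜} (hM : M.IsHermitian) (h : M * M = M) : M.PosSemidef := by
  simpa [hM.eq, h] using posSemidef_conjTranspose_mul_self M

section Spectral

variable {𝕜 n : Type*} [RCLike 𝕜] [Fintype n]

lemma star_dotProduct_orthonormalBasis_self (b : OrthonormalBasis n 𝕜 (EuclideanSpace 𝕜 n))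
    (k : n) : star ⇑(b k) ⬝ᵥ ⇑(b k) = 1 := by
  rw [dotProduct_comm, ← EuclideanSpace.inner_eq_star_dotProduct, inner_self_eq_norm_sq_to_K,
    b.orthonormal.1 k, RCLike.ofReal_one, one_pow]

lemma sum_star_dotProduct_mulVec_orthonormalBasis [DecidableEq n]
    (b : OrthonormalBasis n 𝕜 (EuclideanSpace 𝕜 n)) (M : Matrix n n 𝕜) :
    ∑ k, star ⇑(b k) ⬝ᵥ (M *ᵥ ⇑(b k)) = M.trace := by
  have htr : LinearMap.trace 𝕜 _ (toEuclideanLin M) = M.trace := by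
    rw [LinearMap.trace_eq_matrix_trace 𝕜 (PiLp.basisFun 2 𝕜 n)]
    exact congrArg trace (LinearMap.toMatrix_toLin _ _ M)
  rw [← htr, LinearMap.trace_eq_sum_inner _ b]
  simp [EuclideanSpace.inner_eq_star_dotProduct, dotProduct_comm]

variable [DecidableEq n] {A : Matrix n n 𝕜}

lemma star_dotProduct_mulVec_mul_eigenvectorBasis (hA : A.IsHermitian) (M : Matrix n n 𝕜)
    (k : n) :
    star ⇑(hA.eigenvectorBasis k) ⬝ᵥ ((M * A) *ᵥ ⇑(hA.eigenvectorBasis k)) =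
      hA.eigenvalues k * (star ⇑(hA.eigenvectorBasis k) ⬝ᵥ (M *ᵥ ⇑(hA.eigenvectorBasis k))) := by
  rw [← mulVec_mulVec, hA.mulVec_eigenvectorBasis, mulVec_smul, dotProduct_smul,
    RCLike.real_smul_eq_coe_mul]

lemma star_dotProduct_mulVec_eigenvectorBasis (hA : A.IsHermitian) (k : n) :
    star ⇑(hA.eigenvectorBasis k) ⬝ᵥ (A *ᵥ ⇑(hA.eigenvectorBasis k)) = hA.eigenvalues k := by
  simpa [star_dotProduct_orthonormalBasis_self] using
    star_dotProduct_mulVec_mul_eigenvectorBasis hA 1 k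

lemma trace_mul_eq_sum_eigenvalues_mul (hA : A.IsHermitian) (M : Matrix n n 𝕜) :
    (M * A).trace = ∑ k, hA.eigenvalues k *
      (star ⇑(hA.eigenvectorBasis k) ⬝ᵥ (M *ᵥ ⇑(hA.eigenvectorBasis k))) := by
  simp only [← star_dotProduct_mulVec_mul_eigenvectorBasis,
    sum_star_dotProduct_mulVec_orthonormalBasis]

end Spectral

section BornProb

variable {𝕜 n ι : Type*} [RCLike 𝕜] [Fintype n]

noncomputable def bornProb (b : OrthonormalBasis n 𝕜 (EuclideanSpace 𝕜 n))
    (Q : ι → Matrix n n 𝕜) : Matrix n ι ℝ :=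
  of fun k i => RCLike.re (star ⇑(b k) ⬝ᵥ (Q i *ᵥ ⇑(b k)))

variable (b : OrthonormalBasis n 𝕜 (EuclideanSpace 𝕜 n)) {Q : ι → Matrix n n 𝕜}

lemma coe_bornProb (hQ : ∀ i, (Q i).IsHermitian) (k : n) (i : ι) :
    (bornProb b Q k i : 𝕜) = star ⇑(b k) ⬝ᵥ (Q i *ᵥ ⇑(b k)) :=
  RCLike.conj_eq_iff_re.1 (RCLike.conj_eq_iff_im.2 ((hQ i).im_star_dotProduct_mulVec_self _))

lemma bornProb_nonneg (hQ : ∀ i, (Q i).PosSemidef) (k : n) (i : ι) : 0 ≤ bornProb b Q k i :=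
  (hQ i).re_dotProduct_nonneg _

lemma bornProb_mulVec_one [Fintype ι] [DecidableEq n] (hQ : ∑ i, Q i = 1) :
    bornProb b Q *ᵥ 1 = 1 := by
  funext k
  have := congrArg (fun M => RCLike.re (star ⇑(b k) ⬝ᵥ (M *ᵥ ⇑(b k)))) hQ
  simp only [sum_mulVec, dotProduct_sum, map_sum, one_mulVec,
    star_dotProduct_orthonormalBasis_self, RCLike.one_re] at this
  simpa [mulVec, dotProduct, bornProb] using this

lemma one_vecMul_bornProb [Fintype ι] [DecidableEq n] :
    1 ᵥ* bornProb b Q = fun i => RCLike.re (Q i).trace := by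
  funext i
  rw [← sum_star_dotProduct_mulVec_orthonormalBasis b, map_sum]
  simp [vecMul, dotProduct, bornProb]

end BornProb

lemma eigenvalues_eq_mulVec_of_eq_sum {𝕜 n ι : Type*} [RCLike 𝕜] [Fintype n] [DecidableEq n]
    [Fintype ι] [DecidableEq ι] {A σ : Matrix n n 𝕜} {Q : ι → Matrix n n 𝕜}
    (hQ : ∀ i, (Q i).IsHermitian) (hA : A.IsHermitian) (hσ : σ.IsHermitian)
    (hAσ : A = ∑ i, ((σ * Q i).trace / (Q i).trace) • Q i) :
    hA.eigenvalues = (bornProb hA.eigenvectorBasis Q *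
      diagonal (fun i => (RCLike.re (Q i).trace)⁻¹) * (bornProb hσ.eigenvectorBasis Q)ᵀ) *ᵥ
        hσ.eigenvalues := by
  subst hAσ
  set t : ι → ℝ := fun i => RCLike.re (Q i).trace
  have htr : ∀ i, (Q i).trace = (t i : 𝕜) := fun i => ((hQ i).coe_re_trace).symm
  funext k
  apply RCLike.ofReal_injective (K := 𝕜)
  rw [← star_dotProduct_mulVec_eigenvectorBasis hA k, sum_mulVec, dotProduct_sum]
  simp only [smul_mulVec, dotProduct_smul, smul_eq_mul, ← coe_bornProb _ hQ, trace_mul_comm σ,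
    trace_mul_eq_sum_eigenvalues_mul hσ, htr]
  simp only [mulVec, dotProduct, mul_apply, transpose_apply, diagonal_apply, mul_ite, mul_zero,
    sum_ite_eq', mem_univ, if_true]
  push_cast
  simp only [sum_mul, div_eq_mul_inv]
  rw [sum_comm]
  exact sum_congr rfl fun i _ => sum_congr rfl fun l _ => by ring

theorem majorized_eigenvalues_cgState {d m : ℕ} {ρ σ : Matrix (Fin d) (Fin d) ℂ}
    {Q : Fin m → Matrix (Fin d) (Fin d) ℂ} (hQ : ∀ i, (Q i).PosSemidef) (hQ1 : ∑ i, Q i = 1)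
    (hQ0 : ∀ i, Q i ≠ 0) (hρσ : ∀ i, (ρ * Q i).trace = (σ * Q i).trace)
    (hσ : σ.IsHermitian) (hcg : (cgState ρ Q).IsHermitian) :
    Majorized hcg.eigenvalues hσ.eigenvalues := by
  have htr : ∀ i, 0 < RCLike.re (Q i).trace := fun i =>
    (RCLike.pos_iff.1 ((hQ i).trace_nonneg.lt_of_ne' ((hQ i).trace_eq_zero_iff.not.2 (hQ0 i)))).1
  rw [eigenvalues_eq_mulVec_of_eq_sum (fun i => (hQ i).1) hcg hσ (by simp only [cgState, hρσ])]
  exact majorized_mulVec_of_mem_doublyStochastic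
    (mul_diagonal_inv_mul_transpose_mem_doublyStochastic (bornProb_nonneg _ hQ)
      (bornProb_nonneg _ hQ) htr (bornProb_mulVec_one _ hQ1) (bornProb_mulVec_one _ hQ1)
      (one_vecMul_bornProb _) (one_vecMul_bornProb _)) _

lemma trace_cgState_mul_of_orthogonal {d m : ℕ} {P : Fin m → Matrix (Fin d) (Fin d) ℂ}
    (hP : ∀ j, (P j).PosSemidef) (hPo : ∀ i j, P i * P j = if i = j then P i else 0)
    (ρ : Matrix (Fin d) (Fin d) ℂ) (j : Fin m) :
    (cgState ρ P * P j).trace = (ρ * P j).trace := by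
  simp only [cgState, sum_mul, Matrix.smul_mul, hPo, smul_ite, smul_zero, sum_ite_eq', mem_univ,
    if_true, trace_smul, smul_eq_mul]
  rcases eq_or_ne (P j).trace 0 with h | h
  · -- division by `Tr (P j) = 0` gives `0`, which is harmless since then `P j = 0`
    simp [(hP j).trace_eq_zero_iff.1 h]
  · exact div_mul_cancel₀ _ h

theorem cgState_eigenvalues_majorized_general {d n : ℕ} (ρ : Matrix (Fin d) (Fin d) ℂ)
    (P : Fin d → Matrix (Fin d) (Fin d) ℂ) (hP : FineGrained P)
    (D : Matrix (Fin n) (Fin d) ℝ) (hD : ColStochastic D)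
    (Q : Fin n → Matrix (Fin d) (Fin d) ℂ)
    (hQ : ∀ i, Q i = ∑ j, (D i j : ℂ) • P j)
    (hQ0 : ∀ i, Q i ≠ 0)
    (hcgP : (cgState ρ P).IsHermitian) (hcgQ : (cgState ρ Q).IsHermitian) :
    Majorized hcgQ.eigenvalues hcgP.eigenvalues := by
  obtain ⟨hPh, hPo, hP1, -⟩ := hP
  have hPpsd : ∀ j, (P j).PosSemidef := fun j =>
    (hPh j).posSemidef_of_mul_self_eq (by simpa using hPo j j)
  have hQpsd : ∀ i, (Q i).PosSemidef := fun i => hQ i ▸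
    posSemidef_sum _ fun j _ => (hPpsd j).smul (Complex.zero_le_real.2 (hD.1 i j))
  have hQ1 : ∑ i, Q i = 1 := by
    simp_rw [hQ]
    rw [sum_comm]
    simp [← sum_smul, hD.2, hP1]
  refine majorized_eigenvalues_cgState hQpsd hQ1 hQ0 (fun i => ?_) hcgP hcgQ
  simp only [hQ i, mul_sum, trace_sum, Matrix.mul_smul, trace_smul,
    trace_cgState_mul_of_orthogonal hPpsd hPo]

/-- the eigenvalue vector of the coarse-grained state under a
classically post-processed measurement is majorized by the eigenvalue vector of
the coarse-grained state under the original fine-grained measurement. -/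
theorem cgState_eigenvalues_majorized {d n : ℕ} (ρ : Matrix (Fin d) (Fin d) ℂ)
    (hρ : ρ.PosSemidef) (hρtr : ρ.trace = 1)
    (P : Fin d → Matrix (Fin d) (Fin d) ℂ) (hP : FineGrained P)
    (D : Matrix (Fin n) (Fin d) ℝ) (hD : ColStochastic D)
    (Q : Fin n → Matrix (Fin d) (Fin d) ℂ)
    (hQ : ∀ i, Q i = ∑ j, (D i j : ℂ) • P j)
    (hQ0 : ∀ i, Q i ≠ 0)
    (hcgP : (cgState ρ P).IsHermitian) (hcgQ : (cgState ρ Q).IsHermitian) :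
    Majorized hcgQ.eigenvalues hcgP.eigenvalues :=
  cgState_eigenvalues_majorized_general ρ P hP D hD Q hQ hQ0 hcgP hcgQ
end

section
/- Let H be a d×d Hermitian Hamiltonian with eigenvalues E_1 ≤ E_2 ≤ … ≤ E_d (listed in increasing order) and let ρ be a quantum state on the same d-dimensional Hilbert space with eigenvalues λ_1↓ ≥ λ_2↓ ≥ … ≥ λ_d↓ (listed in decreasing order). Then the passive energy satisfies min over unitaries U of Tr(H U ρ U†) = Σ_{i=1}^d E_i λ_i↓, i.e. the minimum is achieved by pairing the increasing eigenvalues of H with the decreasing eigenvalues of ρ. -/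
open Matrix ComplexOrder

/-!
Write `H = P diag(E) P†` and `ρ = W diag(λ) W†` with `P`, `W` unitary. For a unitary `U`, put
`V = P† U W`; then `Tr(H U ρ U†) = ∑ᵢⱼ Eᵢ λⱼ |Vᵢⱼ|²`, a linear function of the doubly stochastic
matrix `(|Vᵢⱼ|²)`. By Birkhoff's theorem its minimum over doubly stochastic matrices is attained
at a permutation matrix, where the rearrangement inequality shows that pairing increasing `E` with
decreasing `λ` is optimal; that permutation matrix is itself unitary, so the bound is attained.
-/

section DoublyStochastic

variable {n : Type*} [Fintype n] [DecidableEq n]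

theorem sum_sum_mul_permMatrix (f g : n → ℝ) (σ : Equiv.Perm n) :
    ∑ i, ∑ j, f i * g j * σ.permMatrix ℝ i j = ∑ i, f i * g (σ i) := by
  simp [PEquiv.toMatrix_apply, Equiv.toPEquiv_apply]

theorem Antivary.sum_mul_comp_perm_le_sum_sum_mul_of_mem_doublyStochastic {f g : n → ℝ}
    {σ : Equiv.Perm n} (hfg : Antivary f (g ∘ σ)) {B : Matrix n n ℝ}
    (hB : B ∈ doublyStochastic ℝ n) :
    ∑ i, f i * g (σ i) ≤ ∑ i, ∑ j, f i * g j * B i j := by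
  let φ : Matrix n n ℝ →ₗ[ℝ] ℝ := ∑ i, ∑ j, (f i * g j) • entryLinearMap ℝ ℝ i j
  have hφ (M : Matrix n n ℝ) : φ M = ∑ i, ∑ j, f i * g j * M i j := by simp [φ]
  rw [← SetLike.mem_coe, doublyStochastic_eq_convexHull_permMatrix] at hB
  obtain ⟨_, ⟨τ, rfl⟩, hτ⟩ :=
    (φ.concaveOn convex_univ).exists_le_of_mem_convexHull (Set.subset_univ _) hB
  rw [hφ, hφ, sum_sum_mul_permMatrix] at hτ
  refine le_trans ?_ hτ
  simpa using hfg.sum_mul_le_sum_mul_comp_perm (σ := σ⁻¹ * τ)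

theorem map_normSq_mem_doublyStochastic {U : Matrix n n ℂ} (hU : U ∈ unitaryGroup n ℂ) :
    U.map Complex.normSq ∈ doublyStochastic ℝ n := by
  have hrow := congr_fun₂ (mem_unitaryGroup_iff.mp hU)
  have hcol := congr_fun₂ (mem_unitaryGroup_iff'.mp hU)
  refine mem_doublyStochastic_iff_sum.mpr
    ⟨fun i j => Complex.normSq_nonneg _, fun i => ?_, fun j => ?_⟩
  · have := hrow i i
    simp only [mul_apply, star_apply, one_apply_eq, Complex.star_def, Complex.mul_conj] at this
    exact_mod_cast this
  · have := hcol j j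
    simp only [mul_apply, star_apply, one_apply_eq, Complex.star_def,
      mul_comm (starRingEnd ℂ _), Complex.mul_conj] at this
    exact_mod_cast this

theorem permMatrix_mem_unitaryGroup (σ : Equiv.Perm n) :
    σ.permMatrix ℂ ∈ unitaryGroup n ℂ := by
  rw [mem_unitaryGroup_iff, star_eq_conjTranspose, conjTranspose_permMatrix, ← permMatrix_mul]
  simp

omit [Fintype n] in
theorem map_normSq_permMatrix (σ : Equiv.Perm n) :
    (σ.permMatrix ℂ).map Complex.normSq = σ.permMatrix ℝ := by
  ext i j
  simp [PEquiv.toMatrix_apply, apply_ite Complex.normSq]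

end DoublyStochastic

section Trace

variable {n : Type*} [Fintype n]

theorem trace_conj_mul_conj {R : Type*} [CommSemiring R] [StarRing R] (P Q U A B : Matrix n n R) :
    (P * A * Pᴴ * (U * (Q * B * Qᴴ) * Uᴴ)).trace =
      (A * (Pᴴ * U * Q) * B * (Pᴴ * U * Q)ᴴ).trace := by
  simp only [Matrix.mul_assoc]
  rw [trace_mul_comm P]
  simp only [conjTranspose_mul, conjTranspose_conjTranspose, Matrix.mul_assoc]

theorem re_trace_diagonal_mul_mul_diagonal_mul_conjTranspose [DecidableEq n] (a b : n → ℝ)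
    (V : Matrix n n ℂ) :
    (diagonal (fun i => (a i : ℂ)) * V * diagonal (fun j => (b j : ℂ)) * Vᴴ).trace.re =
      ∑ i, ∑ j, a i * b j * V.map Complex.normSq i j := by
  have hterm (i j : n) : (a i : ℂ) * V i j * b j * star (V i j) =
      ((a i * b j * Complex.normSq (V i j) : ℝ) : ℂ) := by
    push_cast
    rw [← Complex.mul_conj, Complex.star_def]
    ring
  simp only [trace, diag_apply, mul_apply (N := Vᴴ), mul_diagonal, diagonal_mul,
    conjTranspose_apply, hterm, map_apply]
  norm_cast

end Trace

theorem IsONB.transpose_matrixOf_mem_unitaryGroup {d : ℕ} {v : Fin d → Fin d → ℂ} (hv : IsONB v) :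
    (of v)ᵀ ∈ unitaryGroup (Fin d) ℂ := by
  rw [mem_unitaryGroup_iff']
  ext i j
  simpa [mul_apply, dotProduct, one_apply] using hv i j

theorem sum_smul_projVec_eq_mul_diagonal_mul_conjTranspose {d : ℕ} (v : Fin d → Fin d → ℂ)
    (E : Fin d → ℝ) :
    ∑ j, (E j : ℂ) • projVec (v j) = (of v)ᵀ * diagonal (fun j => (E j : ℂ)) * ((of v)ᵀ)ᴴ := by
  ext a b
  simp only [Matrix.sum_apply, Matrix.smul_apply, projVec, vecMulVec_apply, Pi.star_apply,
    smul_eq_mul, mul_apply (N := ((of v)ᵀ)ᴴ), mul_diagonal, conjTranspose_apply, transpose_apply,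
    of_apply]
  exact Finset.sum_congr rfl fun j _ => by ring

theorem antitone_descSort {d : ℕ} (x : Fin d → ℝ) : Antitone (descSort x) :=
  (Tuple.monotone_sort x).comp_antitone fun _ _ h => Fin.rev_le_rev.mpr h

theorem passive_energy_eq_sorted_pairing_general {d : ℕ} (H : Matrix (Fin d) (Fin d) ℂ)
    (E : Fin d → ℝ) (hE : Monotone E)
    (v : Fin d → (Fin d → ℂ)) (hv : IsONB v)
    (hH : H = ∑ j, (E j : ℂ) • projVec (v j))
    (ρ : Matrix (Fin d) (Fin d) ℂ) (hρ : ρ.PosSemidef) :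
    IsLeast
      {x : ℝ | ∃ U ∈ Matrix.unitaryGroup (Fin d) ℂ,
        x = ((H * (U * ρ * Uᴴ)).trace).re}
      (∑ i, E i * descSort hρ.1.eigenvalues i) := by
  set lam := hρ.1.eigenvalues
  set P := (of v)ᵀ
  set W : Matrix (Fin d) (Fin d) ℂ := ↑hρ.1.eigenvectorUnitary
  have hP : P ∈ unitaryGroup (Fin d) ℂ := hv.transpose_matrixOf_mem_unitaryGroup
  have hW : W ∈ unitaryGroup (Fin d) ℂ := hρ.1.eigenvectorUnitary.2
  have henergy (U : Matrix (Fin d) (Fin d) ℂ) : ((H * (U * ρ * Uᴴ)).trace).re =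
      ∑ i, ∑ j, E i * lam j * (Pᴴ * U * W).map Complex.normSq i j := by
    rw [hH, sum_smul_projVec_eq_mul_diagonal_mul_conjTranspose, hρ.1.spectral_theorem,
      Unitary.conjStarAlgAut_apply, star_eq_conjTranspose, trace_conj_mul_conj]
    exact re_trace_diagonal_mul_mul_diagonal_mul_conjTranspose E lam _
  -- the sorting permutation: `descSort lam = lam ∘ σ` holds definitionally
  set σ : Equiv.Perm (Fin d) := Fin.revPerm.trans (Tuple.sort lam)
  have hanti : Antivary E (lam ∘ σ) := hE.antivary (antitone_descSort lam)
  refine ⟨⟨P * σ.permMatrix ℂ * Wᴴ, ?_, ?_⟩, ?_⟩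
  · rw [← star_eq_conjTranspose]
    exact mul_mem (mul_mem hP (permMatrix_mem_unitaryGroup σ)) (Unitary.star_mem hW)
  · have hV : Pᴴ * (P * σ.permMatrix ℂ * Wᴴ) * W = σ.permMatrix ℂ := by
      simp only [← star_eq_conjTranspose, Matrix.mul_assoc, Unitary.star_mul_self_of_mem hW,
        ← Matrix.mul_assoc (star P), Unitary.star_mul_self_of_mem hP, Matrix.one_mul,
        Matrix.mul_one]
    rw [henergy, hV, map_normSq_permMatrix, sum_sum_mul_permMatrix]
    rfl
  · rintro _ ⟨U, hU, rfl⟩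
    rw [henergy]
    exact hanti.sum_mul_comp_perm_le_sum_sum_mul_of_mem_doublyStochastic
      (map_normSq_mem_doublyStochastic (mul_mem (mul_mem (Unitary.star_mem hP) hU) hW))

/-- the minimum of `Tr(H U ρ U†)` over unitaries `U` is attained and
equals `∑ i, E i · λ↓ i`, pairing the increasing eigenvalues of `H` with the
decreasing eigenvalues of `ρ`. -/
theorem passive_energy_eq_sorted_pairing {d : ℕ} (H : Matrix (Fin d) (Fin d) ℂ)
    (E : Fin d → ℝ) (hE : Monotone E)
    (v : Fin d → (Fin d → ℂ)) (hv : IsONB v)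
    (hH : H = ∑ j, (E j : ℂ) • projVec (v j))
    (ρ : Matrix (Fin d) (Fin d) ℂ) (hρ : ρ.PosSemidef) (hρtr : ρ.trace = 1) :
    IsLeast
      {x : ℝ | ∃ U ∈ Matrix.unitaryGroup (Fin d) ℂ,
        x = ((H * (U * ρ * Uᴴ)).trace).re}
      (∑ i, E i * descSort hρ.1.eigenvalues i) :=
  passive_energy_eq_sorted_pairing_general H E hE v hv hH ρ hρ
end
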